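/- Let (R, m) be a commutative Noetherian local ring, S := R[X]_{⟨m,X⟩}, and let J be an ideal of R. Then (JS + XS)/X(JS + XS) is isomorphic to J ⊕ R/J as R-modules. -/

import Mathlib

open Polynomial IsLocalRing CategoryTheory Filter
open scoped ENNReal

noncomputable section

/-- The length of a module, i.e. the length of the longest chain of submodules.
For a vector space this equals its dimension. -/
def moduleLength (R V : Type) [CommRing R] [AddCommGroup V] [Module R V] : ℕ∞ :=
  (Order.krullDim (Submodule R V)).unbotD 0

/-- `Ext_R^n(M, N)`. -/
def extModule (R : Type) [CommRing R] (M N : Type)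
    [AddCommGroup M] [Module R M] [AddCommGroup N] [Module R N] (n : ℕ) : ModuleCat R :=
  ((Ext R (ModuleCat R) n).obj (Opposite.op (ModuleCat.of R M))).obj (ModuleCat.of R N)

/-- The `n`-th Betti number `β_n^R(M) = dim_k Ext_R^n(M, k)` of a module `M` over a local
ring `(R, 𝔪, k)`, where the `k`-dimension is expressed as the length of the module. -/
def betti (R : Type) [CommRing R] [IsLocalRing R] (M : Type)
    [AddCommGroup M] [Module R M] (n : ℕ) : ℕ∞ :=
  moduleLength R (extModule R M (ResidueField R) n)

/-- The complexity `cx_R(M)`: the least `b : ℕ` such that `β_n^R(M) ≤ α * n ^ (b - 1)`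
for some real `α > 0` and all `n ≫ 0`; `⊤` if no such `b` exists. -/
def complexity (R : Type) [CommRing R] [IsLocalRing R] (M : Type)
    [AddCommGroup M] [Module R M] : ℕ∞ :=
  sInf {c : ℕ∞ | ∃ b : ℕ, c = b ∧ ∃ α : ℝ, 0 < α ∧
    ∀ᶠ n : ℕ in atTop, (betti R M n : ℝ≥0∞) ≤ ENNReal.ofReal (α * (n : ℝ) ^ ((b : ℝ) - 1))}

/-- The curvature `curv_R(M) = limsup_n (β_n^R(M)) ^ (1/n)`. -/
def curvature (R : Type) [CommRing R] [IsLocalRing R] (M : Type)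
    [AddCommGroup M] [Module R M] : ℝ≥0∞ :=
  limsup (fun n : ℕ => (betti R M n : ℝ≥0∞) ^ ((1 : ℝ) / n)) atTop

section S

variable (R : Type) [CommRing R] [IsLocalRing R]

/-- The maximal ideal `⟨𝔪, X⟩` of `R[X]`. -/
def mIdeal : Ideal R[X] := (maximalIdeal R).map (C : R →+* R[X]) ⊔ Ideal.span {X}

lemma mIdeal_eq_ker :
    mIdeal R = RingHom.ker ((residue R).comp (evalRingHom (0 : R))) := by
  apply le_antisymm
  · apply sup_le
    · rw [Ideal.map_le_iff_le_comap]
      intro a ha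
      simp only [Ideal.mem_comap, RingHom.mem_ker, RingHom.comp_apply, coe_evalRingHom, eval_C]
      exact (residue_eq_zero_iff a).mpr ha
    · rw [Ideal.span_le]
      rintro _ rfl
      simp [RingHom.mem_ker]
  · intro f hf
    simp only [RingHom.mem_ker, RingHom.comp_apply, coe_evalRingHom] at hf
    have h0 : f.coeff 0 ∈ maximalIdeal R := by
      rw [coeff_zero_eq_eval_zero]
      exact (residue_eq_zero_iff _).mp hf
    have : f = X * f.divX + C (f.coeff 0) := (X_mul_divX_add f).symm
    rw [this]
    apply Ideal.add_mem
    · exact Ideal.mem_sup_right (Ideal.mul_mem_right _ _ (Ideal.subset_span rfl))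
    · exact Ideal.mem_sup_left (Ideal.mem_map_of_mem _ h0)

instance : (mIdeal R).IsMaximal := by
  rw [mIdeal_eq_ker]
  exact RingHom.ker_isMaximal_of_surjective _
    (residue_surjective.comp fun r => ⟨C r, eval_C⟩)

/-- `S := R[X]` localized at the maximal ideal `⟨𝔪, X⟩`. -/
abbrev LocS : Type := Localization.AtPrime (mIdeal R)

instance : Algebra R (LocS R) :=
  ((algebraMap R[X] (LocS R)).comp (algebraMap R R[X])).toAlgebra

/-- The image of `X` in `S`. -/
def xS : LocS R := algebraMap R[X] (LocS R) X

/-- The ideal `JS + XS` of `S`. -/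
def extIdeal (J : Ideal R) : Ideal (LocS R) :=
  J.map (algebraMap R (LocS R)) ⊔ Ideal.span {xS R}

end S
/-- `r` is integral over the ideal `J`: there is an equation
`r^n + a₁ r^{n-1} + ⋯ + aₙ = 0` with `aᵢ ∈ J^i`. -/
def IsIntegralOverIdeal {R : Type} [CommRing R] (J : Ideal R) (r : R) : Prop :=
  ∃ n : ℕ, 0 < n ∧ ∃ a : ℕ → R, (∀ i ∈ Finset.Icc 1 n, a i ∈ J ^ i) ∧
    r ^ n + ∑ i ∈ Finset.Icc 1 n, a i * r ^ (n - i) = 0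

/-- An ideal is integrally closed if it contains every element integral over it. -/
def IdealIsIntegrallyClosed {R : Type} [CommRing R] (J : Ideal R) : Prop :=
  ∀ r : R, IsIntegralOverIdeal J r → r ∈ J

/-- `M` has finite projective dimension, characterized by the eventual vanishing of
`Ext_R^i(M, -)`. -/
def HasFiniteProjDim (R : Type) [CommRing R] (M : Type) [AddCommGroup M] [Module R M] : Prop :=
  ∃ n : ℕ, ∀ i : ℕ, n < i → ∀ (N : Type) (_ : AddCommGroup N) (_ : Module R N),
    Subsingleton (extModule R M N i)

/-- `M` has finite injective dimension, characterized by the eventual vanishing of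
`Ext_R^i(-, M)`. -/
def HasFiniteInjDim (R : Type) [CommRing R] (M : Type) [AddCommGroup M] [Module R M] : Prop :=
  ∃ n : ℕ, ∀ i : ℕ, n < i → ∀ (N : Type) (_ : AddCommGroup N) (_ : Module R N),
    Subsingleton (extModule R N M i)

/-- A (finitely generated) module `M` is totally reflexive if the canonical map to its double
dual is bijective and `Ext_R^i(M, R) = 0 = Ext_R^i(M^*, R)` for all `i > 0`. -/
def IsTotallyReflexive (R : Type) [CommRing R] (M : Type) [AddCommGroup M] [Module R M] : Prop :=
  Function.Bijective (Module.Dual.eval R M) ∧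
    ∀ i : ℕ, 0 < i → Subsingleton (extModule R M R i) ∧
      Subsingleton (extModule R (Module.Dual R M) R i)

/-- `G-dim_R(M) ≤ n`: there is an exact sequence `0 → G_n → ⋯ → G_0 → M → 0` with all `G_i`
totally reflexive; phrased recursively via kernels of surjections from totally
reflexive modules. -/
def GdimLE (R : Type) [CommRing R] : ℕ → (M : Type) → [AddCommGroup M] → [Module R M] → Prop
  | 0, M, _, _ => IsTotallyReflexive R M
  | (n + 1), M, _, _ => ∃ (G : Type) (_ : AddCommGroup G) (_ : Module R G) (f : G →ₗ[R] M),
      IsTotallyReflexive R G ∧ Function.Surjective f ∧ GdimLE R n (LinearMap.ker f)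

/-- The Gorenstein dimension `G-dim_R(M) ∈ ℕ∞`. -/
def Gdim (R : Type) [CommRing R] (M : Type) [AddCommGroup M] [Module R M] : ℕ∞ :=
  sInf {c : ℕ∞ | ∃ n : ℕ, c = n ∧ GdimLE R n M}

/-- A local ring is regular if its maximal ideal is generated by `dim R` elements. -/
def IsRegularLocal (R : Type) [CommRing R] [IsLocalRing R] : Prop :=
  ∃ s : Finset R, Ideal.span (s : Set R) = maximalIdeal R ∧
    (s.card : WithBot ℕ∞) = ringKrullDim R

/-- A Noetherian local ring `R` is a complete intersection if its `𝔪`-adic completion is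
isomorphic to `Q/(f₁, …, f_c)` for some regular local ring `Q` and a `Q`-regular
sequence `f₁, …, f_c`. -/
def IsCompleteIntersectionLocal (R : Type) [CommRing R] [IsLocalRing R] : Prop :=
  ∃ (Q : Type) (_ : CommRing Q) (_ : IsLocalRing Q) (_ : IsNoetherianRing Q),
    IsRegularLocal Q ∧ ∃ fs : List Q, RingTheory.Sequence.IsRegular Q fs ∧
      Nonempty ((AdicCompletion (maximalIdeal R) R) ≃+* (Q ⧸ Ideal.ofList fs))

set_option maxSynthPendingDepth 3

/-!
Evaluation at `X = 0` is an `R`-algebra retraction `π : S → R` whose kernel is `XS`, and `X` is a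
nonzerodivisor of `S`. Hence `S` acts on `I/XI`, `I = JS + XS`, through `π`, and every `s ∈ I`
is `π s + X t` with `π s ∈ J`. So `(j, r mod J) ↦ [j + X r]` maps `J × R/J` onto `I/XI`; it is
injective because applying `π` to `j + X r = X w` (`w ∈ I`) gives `j = 0`, and cancelling `X`
gives `r = w`, whence `r = π w ∈ J`.
-/

section Retraction

variable {R S : Type*} [CommRing R] [CommRing S] [Algebra R S]

abbrev Ideal.mapSupSpanSingleton (J : Ideal R) (x : S) : Ideal S :=
  J.map (algebraMap R S) ⊔ Ideal.span {x}

/-- Mathlib's `QuotSMulTop x M`, with `x • ⊤` written as `Ideal.span {x} • ⊤`. -/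
abbrev QuotSpanSMulTop (x : S) (M : Type*) [AddCommGroup M] [Module S M] : Type _ :=
  M ⧸ (Ideal.span {x} • ⊤ : Submodule S M)

variable (J : Ideal R) {π : S →+* R} {x : S}

lemma exists_eq_algebraMap_add_mul (hπ : Function.LeftInverse π (algebraMap R S))
    (hker : RingHom.ker π ≤ Ideal.span {x}) (s : S) :
    ∃ t, s = algebraMap R S (π s) + x * t := by
  have hs : s - algebraMap R S (π s) ∈ RingHom.ker π := by
    rw [RingHom.mem_ker, map_sub, hπ, sub_self]
  obtain ⟨t, ht⟩ := Ideal.mem_span_singleton'.mp (hker hs)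
  exact ⟨t, by rw [mul_comm, ht, add_sub_cancel]⟩

lemma QuotSpanSMulTop.smul_eq_smul_apply {M : Type*} [AddCommGroup M] [Module S M] [Module R M]
    [IsScalarTower R S M] (hπ : Function.LeftInverse π (algebraMap R S))
    (hker : RingHom.ker π ≤ Ideal.span {x}) (c : S)
    (q : QuotSpanSMulTop x M) : c • q = π c • q := by
  obtain ⟨m, rfl⟩ := Submodule.Quotient.mk_surjective _ q
  obtain ⟨t, ht⟩ := exists_eq_algebraMap_add_mul hπ hker c
  have hxt : (x * t) • Submodule.Quotient.mk m = (0 : QuotSpanSMulTop x M) := by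
    rw [← Submodule.Quotient.mk_smul, Submodule.Quotient.mk_eq_zero, mul_smul]
    exact Submodule.smul_mem_smul (Ideal.mem_span_singleton_self x) trivial
  conv_lhs => rw [ht, add_smul, hxt, add_zero, algebraMap_smul]

lemma Ideal.mapSupSpanSingleton_le_comap (hπ : Function.LeftInverse π (algebraMap R S))
    (hx : π x = 0) :
    J.mapSupSpanSingleton x ≤ J.comap π := by
  refine sup_le ?_ ?_
  · rw [Ideal.map_le_iff_le_comap]
    intro j hj
    show π (algebraMap R S j) ∈ J
    rwa [hπ]
  · rw [Ideal.span_singleton_le_iff_mem, Ideal.mem_comap, hx]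
    exact J.zero_mem

namespace Ideal.mapSupSpanSingleton

variable (x)

lemma algebraMap_mem {j : R} (hj : j ∈ J) : algebraMap R S j ∈ J.mapSupSpanSingleton x :=
  Ideal.mem_sup_left (Ideal.mem_map_of_mem _ hj)

lemma self_mem : x ∈ J.mapSupSpanSingleton x :=
  Ideal.mem_sup_right (Ideal.mem_span_singleton_self x)

def toQuotOfIdeal : J →ₗ[R] QuotSpanSMulTop x (J.mapSupSpanSingleton x) :=
  (Submodule.mkQ _).restrictScalars R ∘ₗ
    LinearMap.codRestrict ((J.mapSupSpanSingleton x).restrictScalars R)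
      (Algebra.linearMap R S ∘ₗ J.subtype) (fun j => algebraMap_mem J x j.2)

def toQuotOfQuot : (R ⧸ J) →ₗ[R] QuotSpanSMulTop x (J.mapSupSpanSingleton x) :=
  J.liftQ (LinearMap.toSpanSingleton R _ (Submodule.Quotient.mk ⟨x, self_mem J x⟩)) (by
    intro j hj
    rw [LinearMap.mem_ker, LinearMap.toSpanSingleton_apply, ← algebraMap_smul S,
      ← Submodule.Quotient.mk_smul, Submodule.Quotient.mk_eq_zero]
    have : algebraMap R S j • (⟨x, self_mem J x⟩ : J.mapSupSpanSingleton x) =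
        x • ⟨algebraMap R S j, algebraMap_mem J x hj⟩ := Subtype.ext (mul_comm _ _)
    rw [this]
    exact Submodule.smul_mem_smul (Ideal.mem_span_singleton_self x) trivial)

def toQuot : (J × (R ⧸ J)) →ₗ[R] QuotSpanSMulTop x (J.mapSupSpanSingleton x) :=
  (toQuotOfIdeal J x).coprod (toQuotOfQuot J x)

lemma toQuot_apply (j : J) (r : R) : toQuot J x (j, Submodule.Quotient.mk r) =
    Submodule.Quotient.mk ⟨algebraMap R S j, algebraMap_mem J x j.2⟩ +
      r • Submodule.Quotient.mk ⟨x, self_mem J x⟩ :=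
  rfl

variable {J x}

lemma toQuot_injective (hπ : Function.LeftInverse π (algebraMap R S))
    (hx : x ∈ nonZeroDivisors S) (hker : RingHom.ker π = Ideal.span {x}) :
    Function.Injective (toQuot J x) := by
  rw [injective_iff_map_eq_zero]
  rintro ⟨j, q⟩ h
  obtain ⟨r, rfl⟩ := Submodule.Quotient.mk_surjective _ q
  rw [toQuot_apply, ← Submodule.Quotient.mk_smul, ← Submodule.Quotient.mk_add,
    Submodule.Quotient.mk_eq_zero, Submodule.ideal_span_singleton_smul,
    Submodule.mem_smul_pointwise_iff_exists] at h
  obtain ⟨w, -, hw⟩ := h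
  have hw' : x * w = algebraMap R S j + x * algebraMap R S r := by
    simpa [Algebra.smul_def, mul_comm] using congrArg Subtype.val hw
  have hπx : π x = 0 := RingHom.mem_ker.mp (hker ▸ Ideal.mem_span_singleton_self x)
  have hj : (j : R) = 0 := by simpa [hπx, hπ _] using (congrArg π hw').symm
  have hr : (w : S) = algebraMap R S r := by
    rw [hj, map_zero, zero_add] at hw'
    exact (mul_cancel_left_mem_nonZeroDivisors hx).mp hw'
  have hrJ : r ∈ J := by simpa [hr, hπ _] using J.mapSupSpanSingleton_le_comap hπ hπx w.2
  rw [Prod.mk_eq_zero, Submodule.Quotient.mk_eq_zero]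
  exact ⟨Subtype.ext hj, hrJ⟩

lemma toQuot_surjective (hπ : Function.LeftInverse π (algebraMap R S))
    (hker : RingHom.ker π = Ideal.span {x}) : Function.Surjective (toQuot J x) := by
  intro q
  have hπx : π x = 0 := RingHom.mem_ker.mp (hker ▸ Ideal.mem_span_singleton_self x)
  obtain ⟨⟨s, hs⟩, rfl⟩ := Submodule.Quotient.mk_surjective _ q
  have hπs : π s ∈ J := J.mapSupSpanSingleton_le_comap hπ hπx hs
  obtain ⟨t, ht⟩ := exists_eq_algebraMap_add_mul hπ hker.le s
  refine ⟨(⟨π s, hπs⟩, Submodule.Quotient.mk (π t)), ?_⟩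
  have hsplit : (⟨s, hs⟩ : J.mapSupSpanSingleton x) =
      ⟨algebraMap R S (π s), algebraMap_mem J x hπs⟩ + t • ⟨x, self_mem J x⟩ :=
    Subtype.ext (ht.trans (by rw [mul_comm]; rfl))
  rw [toQuot_apply, hsplit, Submodule.Quotient.mk_add, Submodule.Quotient.mk_smul,
    QuotSpanSMulTop.smul_eq_smul_apply hπ hker.le]

def quotEquivProd (hπ : Function.LeftInverse π (algebraMap R S))
    (hx : x ∈ nonZeroDivisors S) (hker : RingHom.ker π = Ideal.span {x}) :
    QuotSpanSMulTop x (J.mapSupSpanSingleton x) ≃ₗ[R] J × (R ⧸ J) :=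
  (LinearEquiv.ofBijective (toQuot J x)
    ⟨toQuot_injective hπ hx hker, toQuot_surjective hπ hker⟩).symm

end Ideal.mapSupSpanSingleton

end Retraction

section LocS

variable (R : Type) [CommRing R] [IsLocalRing R]

lemma isUnit_eval_zero_of_mem_primeCompl (u : (mIdeal R).primeCompl) :
    IsUnit ((u : R[X]).eval 0) := by
  by_contra h
  refine u.2 ((mIdeal_eq_ker R).ge ?_)
  rw [RingHom.mem_ker, RingHom.comp_apply, residue_eq_zero_iff]
  exact (mem_maximalIdeal _).mpr h

def evalZeroS : LocS R →+* R :=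
  IsLocalization.lift (M := (mIdeal R).primeCompl) (g := evalRingHom (0 : R))
    (isUnit_eval_zero_of_mem_primeCompl R)

lemma evalZeroS_algebraMap (f : R[X]) :
    evalZeroS R (algebraMap R[X] (LocS R) f) = f.eval 0 :=
  IsLocalization.lift_eq _ f

lemma leftInverse_evalZeroS : Function.LeftInverse (evalZeroS R) (algebraMap R (LocS R)) :=
  fun r => (evalZeroS_algebraMap R (C r)).trans eval_C

lemma xS_mem_nonZeroDivisors : xS R ∈ nonZeroDivisors (LocS R) :=
  IsLocalization.nonZeroDivisors_le_comap (mIdeal R).primeCompl (LocS R) X_mem_nonzeroDivisors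

lemma ker_evalZeroS : RingHom.ker (evalZeroS R) = Ideal.span {xS R} := by
  refine le_antisymm (fun s hs => ?_) ?_
  · obtain ⟨⟨f, u⟩, rfl⟩ := IsLocalization.mk'_surjective (mIdeal R).primeCompl s
    dsimp only at hs ⊢
    have hf : f.coeff 0 = 0 := by
      have := congrArg (evalZeroS R) (IsLocalization.mk'_spec (LocS R) f u)
      rwa [map_mul, RingHom.mem_ker.mp hs, zero_mul, evalZeroS_algebraMap,
        ← coeff_zero_eq_eval_zero, eq_comm] at this
    obtain ⟨g, rfl⟩ := X_dvd_iff.mpr hf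
    rw [← IsLocalization.mul_mk'_eq_mk'_of_mul]
    exact Ideal.mul_mem_right _ _ (Ideal.mem_span_singleton_self _)
  · rw [Ideal.span_singleton_le_iff_mem, RingHom.mem_ker, xS, evalZeroS_algebraMap, eval_X]

end LocS

theorem stmt_1_general (R : Type) [CommRing R] [IsLocalRing R] (J : Ideal R) :
    Nonempty ((↥(extIdeal R J) ⧸
        ((Ideal.span {xS R} : Ideal (LocS R)) • (⊤ : Submodule (LocS R) ↥(extIdeal R J))))
      ≃ₗ[R] (↥J × (R ⧸ J))) :=
  -- The statement's `R`-action on `S` is the localization's, `r • (f / u) = (r • f) / u`, not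
  -- definitionally `instAlgebraLocS`'s `algebraMap r * s`; the two share their `algebraMap`.
  ⟨@Ideal.mapSupSpanSingleton.quotEquivProd R (LocS R) _ _ OreLocalization.instAlgebra J _ _
    (leftInverse_evalZeroS R) (xS_mem_nonZeroDivisors R) (ker_evalZeroS R)⟩

/-- `(JS + XS)/X(JS + XS) ≅ J ⊕ R/J` as `R`-modules (the `R`-module structure
on the quotient being restriction of scalars along `R → S`, which corresponds to the
identification `S/XS ≅ R`). -/
theorem stmt_1 (R : Type) [CommRing R] [IsLocalRing R] [IsNoetherianRing R] (J : Ideal R) :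
    Nonempty ((↥(extIdeal R J) ⧸
        ((Ideal.span {xS R} : Ideal (LocS R)) • (⊤ : Submodule (LocS R) ↥(extIdeal R J))))
      ≃ₗ[R] (↥J × (R ⧸ J))) :=
  stmt_1_general R J
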